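/- arXiv:1001.5307 — 2 statements merged into one kernel-verified Lean document; each statement's English description precedes it below -/
import Mathlib

section
/- Let k ≥ 2 and n ≥ 1, let ω = e^(2πi/k), and let W_k be the k×k unitary matrix with entries (W_k)_{j,x} = ω^(xj)/√k. Then for every t ∈ {0,...,k-1}, applying W_k^⊗n to the state (1/√k) Σ_{x=0}^{k-1} ω^(tx) |x⟩^⊗n yields (1/√(k^(n-1))) Σ_{y ∈ {0,...,k-1}^n : t + Σ_j y_j ≡ 0 (mod k)} |y⟩. -/
open Complex Finset

/-
The input state is supported on the constant strings `x^n`, and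
`W_k^⊗n |x⟩^⊗n` has amplitude `ω^(x Σ_j y_j) / √k^n` at `|y⟩`. Hence the amplitude of
`|y⟩` in the output is `Σ_x ω^(x (t + Σ_j y_j)) / √k^(n+1)`, and the character sum
`Σ_x ω^(x m)` is `k` or `0` according as `k ∣ m` or not.
-/

theorem IsPrimitiveRoot.sum_fin_pow_mul {R : Type*} [CommRing R] [IsDomain R] {ζ : R} {k : ℕ}
    (hζ : IsPrimitiveRoot ζ k) (m : ℕ) :
    ∑ x : Fin k, ζ ^ ((x : ℕ) * m) = if k ∣ m then (k : R) else 0 := by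
  simp_rw [mul_comm _ m, pow_mul]
  rw [Fin.sum_univ_eq_sum_range (fun i => (ζ ^ m) ^ i) k]
  split_ifs with hdvd
  · simp [(hζ.pow_eq_one_iff_dvd m).mpr hdvd]
  · have hne : ζ ^ m - 1 ≠ 0 := sub_ne_zero.mpr fun h => hdvd ((hζ.pow_eq_one_iff_dvd m).mp h)
    have hgeom : (ζ ^ m - 1) * ∑ i ∈ range k, (ζ ^ m) ^ i = 0 := by
      rw [mul_geom_sum, ← pow_mul, mul_comm m k, pow_mul, hζ.pow_eq_one, one_pow, sub_self]
    exact (mul_eq_zero.mp hgeom).resolve_left hne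

theorem sum_mul_sum_ite_eq_comp {α β R : Type*} [Fintype α] [Fintype β] [DecidableEq α]
    [NonUnitalNonAssocSemiring R] (f : α → R) (g : β → α) (a : β → R) :
    ∑ z, f z * ∑ x, (if z = g x then a x else 0) = ∑ x, f (g x) * a x := by
  simp_rw [mul_sum, mul_ite, mul_zero]
  rw [sum_comm]
  simp

theorem Real.sqrt_pow {a : ℝ} (ha : 0 ≤ a) (m : ℕ) : √(a ^ m) = √a ^ m := by
  rw [← Real.sqrt_sq (pow_nonneg (Real.sqrt_nonneg a) m), ← pow_mul, mul_comm, pow_mul,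
    Real.sq_sqrt ha]

theorem div_sqrt_pow_succ {a : ℝ} (ha : 0 < a) {n : ℕ} (hn : 1 ≤ n) :
    a / √a ^ (n + 1) = 1 / √(a ^ (n - 1)) := by
  obtain ⟨m, rfl⟩ := Nat.exists_eq_add_of_le' hn
  have hs : √a ≠ 0 := (Real.sqrt_pos.mpr ha).ne'
  rw [Real.sqrt_pow ha.le, Nat.add_sub_cancel, pow_succ, pow_succ, mul_assoc,
    Real.mul_self_sqrt ha.le]
  field_simp

theorem stmt_6_general (k n : ℕ) (hk : 2 ≤ k) (hn : 1 ≤ n) (t : ℕ)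
    (ω : ℂ) (hω : ω = Complex.exp (2 * Real.pi * Complex.I / k))
    (W : Matrix (Fin k) (Fin k) ℂ)
    (hW : ∀ j x, W j x = ω ^ ((x : ℕ) * (j : ℕ)) / Real.sqrt k)
    (ψ : (Fin n → Fin k) → ℂ)
    (hψ : ∀ z, ψ z = (1 / Real.sqrt k : ℂ) *
        ∑ x : Fin k, if z = Function.const (Fin n) x then ω ^ (t * (x : ℕ)) else 0) :
    (fun y : Fin n → Fin k => ∑ z : Fin n → Fin k, (∏ j, W (y j) (z j)) * ψ z)
      = fun y : Fin n → Fin k =>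
          if k ∣ (t + ∑ j, (y j : ℕ)) then (1 / Real.sqrt (k ^ (n - 1)) : ℂ) else 0 := by
  have hk0 : 0 < k := by omega
  have hω : IsPrimitiveRoot ω k := hω ▸ Complex.isPrimitiveRoot_exp k hk0.ne'
  funext y
  set s : ℂ := (Real.sqrt k : ℂ)
  have hW_const (x : Fin k) : ∏ j, W (y j) x = ω ^ ((x : ℕ) * ∑ j, (y j : ℕ)) / s ^ n := by
    simp only [hW, prod_div_distrib, prod_const, card_univ, Fintype.card_fin,
      prod_pow_eq_pow_sum, mul_sum]
  calc ∑ z, (∏ j, W (y j) (z j)) * ψ z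
      = 1 / s * ∑ x : Fin k, (∏ j, W (y j) x) * ω ^ (t * (x : ℕ)) := by
        simp_rw [hψ, mul_left_comm _ (1 / s), ← mul_sum]
        rw [sum_mul_sum_ite_eq_comp]
        rfl
    _ = 1 / s ^ (n + 1) * ∑ x : Fin k, ω ^ ((x : ℕ) * (t + ∑ j, (y j : ℕ))) := by
        simp_rw [hW_const, mul_add, pow_add, mul_comm t, mul_sum]
        refine sum_congr rfl fun x _ => ?_
        ring
    _ = _ := by
        rw [hω.sum_fin_pow_mul]
        split_ifs
        · have hnorm := congrArg ((↑) : ℝ → ℂ) (div_sqrt_pow_succ (a := k) (by positivity) hn)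
          push_cast at hnorm
          rw [← hnorm]
          ring
        · simp

/-- Applying `W_k^⊗n` (with `(W_k)_{j,x} = ω^(xj)/√k`, `ω = e^(2πi/k)`) to the
state `(1/√k) Σ_{x=0}^{k-1} ω^(tx) |x⟩^⊗n` yields
`(1/√(k^(n-1))) Σ_{y : t + Σ_j y_j ≡ 0 (mod k)} |y⟩`. -/
theorem stmt_6 (k n : ℕ) (hk : 2 ≤ k) (hn : 1 ≤ n) (t : ℕ) (ht : t < k)
    (ω : ℂ) (hω : ω = Complex.exp (2 * Real.pi * Complex.I / k))
    (W : Matrix (Fin k) (Fin k) ℂ)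
    (hW : ∀ j x, W j x = ω ^ ((x : ℕ) * (j : ℕ)) / Real.sqrt k)
    (ψ : (Fin n → Fin k) → ℂ)
    (hψ : ∀ z, ψ z = (1 / Real.sqrt k : ℂ) *
        ∑ x : Fin k, if z = Function.const (Fin n) x then ω ^ (t * (x : ℕ)) else 0) :
    (fun y : Fin n → Fin k => ∑ z : Fin n → Fin k, (∏ j, W (y j) (z j)) * ψ z)
      = fun y : Fin n → Fin k =>
          if k ∣ (t + ∑ j, (y j : ℕ)) then (1 / Real.sqrt (k ^ (n - 1)) : ℂ) else 0 :=
  stmt_6_general k n hk hn t ω hω W hW ψ hψ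
end

section
/- For n ≥ 1, applying the Hadamard gate H to each of n qubits maps the state (1/√(2^(n-1))) Σ_{x ∈ {0,1}^n, |x| even} |x⟩ to (|0⟩^⊗n + |1⟩^⊗n)/√2, and maps (1/√(2^(n-1))) Σ_{x ∈ {0,1}^n, |x| odd} |x⟩ to (|0⟩^⊗n − |1⟩^⊗n)/√2. -/
/-!
The Hadamard matrix is real, symmetric and squares to the identity, so `H^⊗n` is an involution.
Since `H^⊗n |b…b⟩` has amplitude `(-1)^(b|x|) / √2^n` at `x`, the even-weight state is
`(H^⊗n |0…0⟩ + H^⊗n |1…1⟩) / √2` and the odd-weight state is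
`(H^⊗n |0…0⟩ - H^⊗n |1…1⟩) / √2`;
applying `H^⊗n` once more gives the claim.
-/

open Finset

lemma sqrt_two_pow (k : ℕ) : √(2 ^ k) = √2 ^ k := by
  rw [Real.sqrt_eq_iff_mul_self_eq (by positivity) (by positivity), ← mul_pow,
    Real.mul_self_sqrt zero_le_two]

noncomputable def hadamard (a b : Bool) : ℝ := (if a && b then -1 else 1) / √2

lemma sum_hadamard_mul_hadamard (a b : Bool) :
    ∑ c, hadamard a c * hadamard b c = if a = b then 1 else 0 := by
  have h : (√2)⁻¹ * (√2)⁻¹ = 2⁻¹ := by rw [← mul_inv, Real.mul_self_sqrt zero_le_two]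
  cases a <;> cases b <;> norm_num [hadamard, div_eq_mul_inv, h]

section
variable {ι : Type*} [Fintype ι]

lemma sum_prod_hadamard_mul_prod_hadamard [DecidableEq ι] (y w : ι → Bool) :
    ∑ z : ι → Bool, (∏ i, hadamard (y i) (z i)) * ∏ i, hadamard (w i) (z i) =
      if y = w then 1 else 0 := by
  simp_rw [← prod_mul_distrib]
  rw [← Fintype.prod_sum fun i c => hadamard (y i) c * hadamard (w i) c]
  simp_rw [sum_hadamard_mul_hadamard, Fintype.prod_boole, funext_iff]

lemma prod_hadamard_false (z : ι → Bool) :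
    ∏ i, hadamard false (z i) = 1 / √2 ^ Fintype.card ι := by
  simp [hadamard, prod_const]

lemma prod_hadamard_true (z : ι → Bool) :
    ∏ i, hadamard true (z i) =
      (-1) ^ (univ.filter fun i => z i = true).card / √2 ^ Fintype.card ι := by
  simp only [hadamard, Bool.true_and, prod_div_distrib, prod_ite, prod_const, one_pow, mul_one,
    card_univ]
end

lemma ite_even_eq_div_sqrt_two (m k : ℕ) :
    (if Even k then 1 / √(2 ^ m) else 0) =
      (1 / √2 ^ (m + 1) + (-1) ^ k / √2 ^ (m + 1)) / √2 := by
  rcases Nat.even_or_odd k with hk | hk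
  · have h : √2 * √2 = 2 := Real.mul_self_sqrt zero_le_two
    rw [if_pos hk, hk.neg_one_pow, sqrt_two_pow]
    field_simp
    rw [pow_succ, mul_assoc, h, one_add_one_eq_two]
  · rw [if_neg (Nat.not_even_iff_odd.2 hk), hk.neg_one_pow]; ring

lemma ite_odd_eq_div_sqrt_two (m k : ℕ) :
    (if Even k then 0 else 1 / √(2 ^ m)) =
      (1 / √2 ^ (m + 1) - (-1) ^ k / √2 ^ (m + 1)) / √2 := by
  rcases Nat.even_or_odd k with hk | hk
  · rw [if_pos hk, hk.neg_one_pow]; ring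
  · have h : √2 * √2 = 2 := Real.mul_self_sqrt zero_le_two
    rw [if_neg (Nat.not_even_iff_odd.2 hk), hk.neg_one_pow, sqrt_two_pow]
    field_simp
    rw [pow_succ, mul_assoc, h]
    ring

/-- `H^⊗n` maps the uniform superposition of even-weight strings to
`(|0⟩^⊗n + |1⟩^⊗n)/√2` and the uniform superposition of odd-weight strings to
`(|0⟩^⊗n − |1⟩^⊗n)/√2`. -/
theorem stmt_12 (n : ℕ) (hn : 1 ≤ n)
    (H : Bool → Bool → ℝ)
    (hH : ∀ a b, H a b = (if a && b then -1 else 1) / Real.sqrt 2)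
    (ψeven ψodd : (Fin n → Bool) → ℝ)
    (hψe : ∀ x, ψeven x =
      if Even (Finset.univ.filter (fun i => x i = true)).card
      then 1 / Real.sqrt (2 ^ (n - 1)) else 0)
    (hψo : ∀ x, ψodd x =
      if Even (Finset.univ.filter (fun i => x i = true)).card
      then 0 else 1 / Real.sqrt (2 ^ (n - 1))) :
    ((fun y : Fin n → Bool => ∑ z : Fin n → Bool, (∏ i, H (y i) (z i)) * ψeven z)
        = fun y : Fin n → Bool =>
            ((if y = Function.const (Fin n) false then 1 else 0)
              + (if y = Function.const (Fin n) true then 1 else 0)) / Real.sqrt 2)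
    ∧ ((fun y : Fin n → Bool => ∑ z : Fin n → Bool, (∏ i, H (y i) (z i)) * ψodd z)
        = fun y : Fin n → Bool =>
            ((if y = Function.const (Fin n) false then 1 else 0)
              - (if y = Function.const (Fin n) true then 1 else 0)) / Real.sqrt 2) := by
  obtain ⟨m, rfl⟩ : ∃ m, n = m + 1 := ⟨n - 1, by omega⟩
  obtain rfl : H = hadamard := funext₂ hH
  have hψeven :
      ψeven = fun z => (∏ i, hadamard false (z i) + ∏ i, hadamard true (z i)) / √2 := by
    funext z
    rw [hψe, prod_hadamard_false, prod_hadamard_true, Fintype.card_fin, Nat.add_sub_cancel,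
      ite_even_eq_div_sqrt_two]
  have hψodd :
      ψodd = fun z => (∏ i, hadamard false (z i) - ∏ i, hadamard true (z i)) / √2 := by
    funext z
    rw [hψo, prod_hadamard_false, prod_hadamard_true, Fintype.card_fin, Nat.add_sub_cancel,
      ite_odd_eq_div_sqrt_two]
  constructor <;> funext y
  · simp_rw [hψeven, mul_div_assoc', mul_add, ← sum_div, sum_add_distrib,
      sum_prod_hadamard_mul_prod_hadamard]
    rfl
  · simp_rw [hψodd, mul_div_assoc', mul_sub, ← sum_div, sum_sub_distrib,
      sum_prod_hadamard_mul_prod_hadamard]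
    rfl
end
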